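/- arXiv:2009.02821 — 6 statements merged into one kernel-verified Lean document; each statement's English description precedes it below -/
import Mathlib

section
/- Let W : ℝ → ℝ be C¹ and satisfy the growth assumptions with constants C₁ > 0, C₂, C₃, C₃', C₄ ∈ ℝ and exponent p ≥ 2. Let η₁ > 0 and η₂ < p·η₁. Then there exist ε₀ > 0 and constants A₁ > 0 and A₂ > 0, depending only on η₁, η₂, p, C₁, C₂, C₃, C₄, such that for every ε with 0 < ε ≤ ε₀ and every u ∈ ℝ one has η₁·W'(u)·u − η₂·W(u) − η₁²·ε²·u² ≥ A₁·|u|^p − A₂. -/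
/-! Write `δ = (p η₁ − η₂) C₁ > 0`. The lower bound on `W' u · u` and the two-sided bound on `W`
give `η₁ W'(u) u − η₂ W(u) ≥ δ |u|^p − const`, and since `p ≥ 2` the quadratic term
`η₁² ε² u²` is at most `(δ / 2)(|u|^p + 1)` once `η₁ ε ≤ √(δ / 2)`. -/

lemma sq_le_abs_rpow_add_one {p : ℝ} (hp : 2 ≤ p) (u : ℝ) : u ^ 2 ≤ |u| ^ p + 1 := by
  rcases le_or_gt 1 |u| with h | h
  · have : |u| ^ (2 : ℝ) ≤ |u| ^ p := Real.rpow_le_rpow_of_exponent_le h hp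
    rw [Real.rpow_two, sq_abs] at this
    linarith
  · have : u ^ 2 ≤ 1 := by nlinarith [sq_abs u, abs_nonneg u]
    linarith [Real.rpow_nonneg (abs_nonneg u) p]

lemma mul_le_mul_add_of_bounds {η a w c₂ c₃ : ℝ} (hlow : a + c₂ ≤ w) (hup : w ≤ a + c₃) :
    η * w ≤ η * a + |η| * (|c₂| + |c₃|) := by
  rcases le_or_gt 0 η with h | h
  · have : η * c₃ ≤ |η| * |c₃| := abs_mul η c₃ ▸ le_abs_self _
    nlinarith [abs_nonneg η, abs_nonneg c₂]
  · have : η * c₂ ≤ |η| * |c₂| := abs_mul η c₂ ▸ le_abs_self _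
    nlinarith [abs_nonneg η, abs_nonneg c₃]

lemma sq_mul_sq_le_of_le_sqrt_div {η ε c : ℝ} (hη : 0 < η) (hε : 0 < ε) (hc : 0 ≤ c)
    (hle : ε ≤ √c / η) : η ^ 2 * ε ^ 2 ≤ c := by
  have : η * ε ≤ √c := by rwa [le_div_iff₀ hη, mul_comm] at hle
  calc η ^ 2 * ε ^ 2 = (η * ε) ^ 2 := by ring
    _ ≤ √c ^ 2 := pow_le_pow_left₀ (by positivity) this 2
    _ = c := Real.sq_sqrt hc

theorem stmt_0_general (W : ℝ → ℝ)
    (p C₁ C₂ C₃ C₄ : ℝ) (hp : 2 ≤ p) (hC₁ : 0 < C₁)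
    (hWlow : ∀ u : ℝ, C₁ * |u| ^ p + C₂ ≤ W u)
    (hWup : ∀ u : ℝ, W u ≤ C₁ * |u| ^ p + C₃)
    (hW'u : ∀ u : ℝ, C₁ * p * |u| ^ p + C₄ ≤ deriv W u * u)
    (η₁ η₂ : ℝ) (hη₁ : 0 < η₁) (hη₂ : η₂ < p * η₁) :
    ∃ ε₀ > (0 : ℝ), ∃ A₁ > (0 : ℝ), ∃ A₂ > (0 : ℝ), ∀ ε : ℝ, 0 < ε → ε ≤ ε₀ → ∀ u : ℝ,
      A₁ * |u| ^ p - A₂ ≤ η₁ * (deriv W u * u) - η₂ * W u - η₁ ^ 2 * ε ^ 2 * u ^ 2 := by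
  set δ : ℝ := (p * η₁ - η₂) * C₁
  have hδ : 0 < δ := mul_pos (by linarith) hC₁
  refine ⟨√(δ / 2) / η₁, by positivity, δ / 2, by positivity,
    |η₁ * C₄| + |η₂| * (|C₂| + |C₃|) + δ / 2 + 1, by positivity, fun ε hε hεle u => ?_⟩
  have hεη : η₁ ^ 2 * ε ^ 2 ≤ δ / 2 := sq_mul_sq_le_of_le_sqrt_div hη₁ hε (half_pos hδ).le hεle
  have hderiv : η₁ * (C₁ * p * |u| ^ p + C₄) ≤ η₁ * (deriv W u * u) :=
    mul_le_mul_of_nonneg_left (hW'u u) hη₁.le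
  have hpot : η₂ * W u ≤ η₂ * (C₁ * |u| ^ p) + |η₂| * (|C₂| + |C₃|) :=
    mul_le_mul_add_of_bounds (hWlow u) (hWup u)
  have hquad : η₁ ^ 2 * ε ^ 2 * u ^ 2 ≤ δ / 2 * (|u| ^ p + 1) :=
    mul_le_mul hεη (sq_le_abs_rpow_add_one hp u) (sq_nonneg u) (half_pos hδ).le
  have hδu : η₁ * (C₁ * p * |u| ^ p) - η₂ * (C₁ * |u| ^ p) = δ * |u| ^ p := by ring
  linarith [neg_abs_le (η₁ * C₄)]

/-- Lower bound `η₁ W'(u)u − η₂ W(u) − η₁² ε² u² ≥ A₁|u|^p − A₂` for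
potentials satisfying the growth assumptions, with `A₁, A₂ > 0` and small `ε`. -/
theorem stmt_0 (W : ℝ → ℝ) (hW : ContDiff ℝ 1 W)
    (p C₁ C₂ C₃ C₃' C₄ : ℝ) (hp : 2 ≤ p) (hC₁ : 0 < C₁)
    (hWlow : ∀ u : ℝ, C₁ * |u| ^ p + C₂ ≤ W u)
    (hWup : ∀ u : ℝ, W u ≤ C₁ * |u| ^ p + C₃)
    (hW' : ∀ u : ℝ, |deriv W u| ≤ C₁ * p * |u| ^ (p - 1) + C₃')
    (hW'u : ∀ u : ℝ, C₁ * p * |u| ^ p + C₄ ≤ deriv W u * u)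
    (η₁ η₂ : ℝ) (hη₁ : 0 < η₁) (hη₂ : η₂ < p * η₁) :
    ∃ ε₀ > (0 : ℝ), ∃ A₁ > (0 : ℝ), ∃ A₂ > (0 : ℝ), ∀ ε : ℝ, 0 < ε → ε ≤ ε₀ → ∀ u : ℝ,
      A₁ * |u| ^ p - A₂ ≤ η₁ * (deriv W u * u) - η₂ * W u - η₁ ^ 2 * ε ^ 2 * u ^ 2 :=
  stmt_0_general W p C₁ C₂ C₃ C₄ hp hC₁ hWlow hWup hW'u η₁ η₂ hη₁ hη₂
end

section
/- Let n ≥ 2, ℓ > 0, κ₀ > 0, let Q ⊂ ℝ^{n−1} be a bounded open set, and let κ₁, …, κ_{n−1} : Q → ℝ be C¹ functions with |κ_j(s)| ≤ κ₀ and |∂κ_j/∂s_i(s)| ≤ κ₀ for all s ∈ Q and all i, j. Let W : ℝ → ℝ be C¹, M > 0, C > 0, η₁ > 0. Then there exists a constant M₂ > 0, depending only on M, C, κ₀, ℓ, n and η₁, such that the following holds: for every ε with 0 < ε < 1/(2ℓκ₀) and every C² function u : ℝⁿ → ℝ satisfying (a) ‖−ε·Δ̃u + ε^{−1}·W'(u)‖_{L²(Ω₁^ℓ)}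 ≤ 2√M, (b) ‖∂u/∂z‖_{L²(Ω₁^ℓ)} ≤ √(2M/η₁), and (c) Σ_{j=1}^{n−1} ( ‖∂u/∂s_j‖_{L²(Ω₁^ℓ)} + ε·‖∂²u/∂s_j²‖_{L²(Ω₁^ℓ)} ) ≤ C, one has ‖−∂²u/∂z² + W'(u)‖_{L²(Ω₁^ℓ)} ≤ M₂·ε. -/
/-!
Multiplying `-εΔ̃u + ε⁻¹W'(u)` by `ε` gives `-∂²u/∂z² + W'(u)` up to three error terms:
`ε² Σ aⱼ² ∂²u/∂sⱼ²`, `ε Σ κⱼ aⱼ ∂u/∂z` and `-ε³ Σ ∂κⱼ/∂sⱼ aⱼ³ ∂u/∂sⱼ`, where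
`aⱼ = (1 + εzκⱼ)⁻¹`. On `Ω₁^ℓ` we have `|εzκⱼ| ≤ εℓκ₀ ≤ 1/2`, so `|aⱼ| ≤ 2`, and each error
term is `O(ε)` in `L²`: the first because `ε‖∂²u/∂sⱼ²‖` is bounded, the second by the bound on
`‖∂u/∂z‖`, the third because `‖∂u/∂sⱼ‖` is bounded and `ε² < (2ℓκ₀)⁻²`.
-/

open MeasureTheory

/-- Tangential partial derivative `∂u/∂s_j` in the product coordinates `(s, z)`. -/
noncomputable def pds {m : ℕ} (j : Fin m) (u : (Fin m → ℝ) × ℝ → ℝ)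
    (x : (Fin m → ℝ) × ℝ) : ℝ :=
  fderiv ℝ u x (Pi.single j 1, 0)

/-- Normal partial derivative `∂u/∂z` in the product coordinates `(s, z)`. -/
noncomputable def pdz {m : ℕ} (u : (Fin m → ℝ) × ℝ → ℝ) (x : (Fin m → ℝ) × ℝ) : ℝ :=
  fderiv ℝ u x (0, 1)

/-- The scaled Laplacian `Δ̃u` in the curvilinear coordinates `(s, z)`. -/
noncomputable def lapTil {m : ℕ} (ε : ℝ) (κ : Fin m → (Fin m → ℝ) → ℝ)
    (u : (Fin m → ℝ) × ℝ → ℝ) (x : (Fin m → ℝ) × ℝ) : ℝ :=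
  (∑ j, ((1 + ε * x.2 * κ j x.1)⁻¹) ^ 2 * pds j (fun y => pds j u y) x)
    + ε⁻¹ * ∑ j, κ j x.1 * (1 + ε * x.2 * κ j x.1)⁻¹ * pdz u x
    + (ε⁻¹) ^ 2 * pdz (fun y => pdz u y) x
    - ε * ∑ j, (fderiv ℝ (κ j) x.1 (Pi.single j 1)) * ((1 + ε * x.2 * κ j x.1)⁻¹) ^ 3 * pds j u x

/-- The `L²` norm of `g` over a set `Ω`. -/
noncomputable def l2norm {m : ℕ} (Ω : Set ((Fin m → ℝ) × ℝ)) (g : (Fin m → ℝ) × ℝ → ℝ) : ℝ :=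
  Real.sqrt (∫ x in Ω, (g x) ^ 2)

open Set Bornology
open scoped ENNReal

section LpNorm

variable {α : Type*} [MeasurableSpace α] {μ : Measure α} {p : ℝ≥0∞}

lemma lpNorm_le_mul_lpNorm_of_ae_le_mul {E F : Type*} [NormedAddCommGroup E]
    [NormedAddCommGroup F] {f : α → E} {g : α → F} {c : ℝ} (hc : 0 ≤ c) (hg : MemLp g p μ)
    (h : ∀ᵐ x ∂μ, ‖f x‖ ≤ c * ‖g x‖) : lpNorm f p μ ≤ c * lpNorm g p μ := by
  by_cases hf : AEStronglyMeasurable f μ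
  · rw [← toReal_eLpNorm hf, ← toReal_eLpNorm hg.1, ← ENNReal.toReal_ofReal hc,
      ← ENNReal.toReal_mul]
    exact ENNReal.toReal_mono (ENNReal.mul_ne_top ENNReal.ofReal_ne_top hg.eLpNorm_ne_top)
      (eLpNorm_le_mul_eLpNorm_of_ae_le_mul h p)
  · rw [lpNorm_of_not_aestronglyMeasurable hf]
    exact mul_nonneg hc lpNorm_nonneg

lemma lpNorm_const_mul (c : ℝ) (f : α → ℝ) : lpNorm (fun x => c * f x) p μ = |c| * lpNorm f p μ :=
  lpNorm_const_smul c f μ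

variable {a f : α → ℝ} {c : ℝ}

lemma MeasureTheory.MemLp.mul_of_ae_abs_le (hf : MemLp f p μ) (ha : AEStronglyMeasurable a μ)
    (hac : ∀ᵐ x ∂μ, |a x| ≤ c) : MemLp (a * f) p μ :=
  hf.of_le_mul (ha.mul hf.1) <| hac.mono fun x hx => by
    simpa only [Pi.mul_apply, norm_mul, Real.norm_eq_abs] using
      mul_le_mul_of_nonneg_right hx (abs_nonneg (f x))

lemma lpNorm_mul_le_of_ae_abs_le (hc : 0 ≤ c) (hf : MemLp f p μ)
    (hac : ∀ᵐ x ∂μ, |a x| ≤ c) : lpNorm (a * f) p μ ≤ c * lpNorm f p μ :=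
  lpNorm_le_mul_lpNorm_of_ae_le_mul hc hf <| hac.mono fun x hx => by
    simpa only [Pi.mul_apply, norm_mul, Real.norm_eq_abs] using
      mul_le_mul_of_nonneg_right hx (abs_nonneg (f x))

lemma lpNorm_sum_mul_le_of_ae_abs_le {ι : Type*} (s : Finset ι) {a f : ι → α → ℝ}
    (hp : 1 ≤ p) (hc : 0 ≤ c) (hf : ∀ i ∈ s, MemLp (f i) p μ)
    (ha : ∀ i ∈ s, AEStronglyMeasurable (a i) μ) (hac : ∀ i ∈ s, ∀ᵐ x ∂μ, |a i x| ≤ c) :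
    lpNorm (∑ i ∈ s, a i * f i) p μ ≤ c * ∑ i ∈ s, lpNorm (f i) p μ := by
  calc lpNorm (∑ i ∈ s, a i * f i) p μ
      ≤ ∑ i ∈ s, lpNorm (a i * f i) p μ :=
        lpNorm_sum_le (fun i hi => (hf i hi).mul_of_ae_abs_le (ha i hi) (hac i hi)) hp
    _ ≤ ∑ i ∈ s, c * lpNorm (f i) p μ :=
        Finset.sum_le_sum fun i hi => lpNorm_mul_le_of_ae_abs_le hc (hf i hi) (hac i hi)
    _ = c * ∑ i ∈ s, lpNorm (f i) p μ := (Finset.mul_sum ..).symm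

end LpNorm

lemma Continuous.memLp_restrict_of_isBounded {X E : Type*} [PseudoMetricSpace X] [ProperSpace X]
    [MeasurableSpace X] [OpensMeasurableSpace X] {μ : Measure X} [IsFiniteMeasureOnCompacts μ]
    [NormedAddCommGroup E] {f : X → E} (hf : Continuous f) {s : Set X} (hs : IsBounded s)
    (p : ℝ≥0∞) : MemLp f p (μ.restrict s) := by
  have hK := hs.isCompact_closure
  have : IsFiniteMeasure (μ.restrict (closure s)) :=
    isFiniteMeasure_restrict.2 hK.measure_lt_top.ne
  obtain ⟨B, hB⟩ := hK.exists_bound_of_continuousOn hf.continuousOn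
  exact (MemLp.of_bound hf.aestronglyMeasurable B
    (ae_restrict_of_forall_mem isClosed_closure.measurableSet hB)).mono_measure
    (Measure.restrict_mono subset_closure le_rfl)

lemma l2norm_eq_lpNorm {m : ℕ} {Ω : Set ((Fin m → ℝ) × ℝ)} {f : (Fin m → ℝ) × ℝ → ℝ}
    (hf : AEStronglyMeasurable f (volume.restrict Ω)) :
    l2norm Ω f = lpNorm f 2 (volume.restrict Ω) := by
  rw [lpNorm_eq_integral_norm_rpow_toReal two_ne_zero ENNReal.ofNat_ne_top hf, l2norm,
    Real.sqrt_eq_rpow]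
  simp [Real.norm_eq_abs]

section Derivatives

variable {m : ℕ} {u : (Fin m → ℝ) × ℝ → ℝ} {k n : WithTop ℕ∞}

lemma ContDiff.pds (hu : ContDiff ℝ n u) (hk : k + 1 ≤ n) (j : Fin m) :
    ContDiff ℝ k (pds j u) :=
  (hu.fderiv_right hk).clm_apply contDiff_const

lemma ContDiff.pdz (hu : ContDiff ℝ n u) (hk : k + 1 ≤ n) : ContDiff ℝ k (pdz u) :=
  (hu.fderiv_right hk).clm_apply contDiff_const

lemma neg_pdz_pdz_add_eq {ε : ℝ} (hε : ε ≠ 0) (κ : Fin m → (Fin m → ℝ) → ℝ) (w : ℝ)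
    (x : (Fin m → ℝ) × ℝ) :
    -(pdz (fun y => pdz u y) x) + w = ε * (-(ε * lapTil ε κ u x) + ε⁻¹ * w)
      + ε ^ 2 * ∑ j, ((1 + ε * x.2 * κ j x.1)⁻¹) ^ 2 * pds j (fun y => pds j u y) x
      + ε * ∑ j, κ j x.1 * (1 + ε * x.2 * κ j x.1)⁻¹ * pdz u x
      + -ε ^ 3 * ∑ j, fderiv ℝ (κ j) x.1 (Pi.single j 1) * ((1 + ε * x.2 * κ j x.1)⁻¹) ^ 3
          * pds j u x := by
  unfold lapTil
  linear_combination (pdz (fun y => pdz u y) x * (ε * ε⁻¹ + 1) - w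
    + ε * ∑ j, κ j x.1 * (1 + ε * x.2 * κ j x.1)⁻¹ * pdz u x) * mul_inv_cancel₀ hε

end Derivatives

lemma abs_inv_one_add_mul_le_two {ε z k ℓ κ₀ : ℝ} (hε : 0 ≤ ε) (hz : |z| ≤ ℓ) (hk : |k| ≤ κ₀)
    (h : 2 * ε * ℓ * κ₀ ≤ 1) : |(1 + ε * z * k)⁻¹| ≤ 2 := by
  have hsmall : |ε * z * k| ≤ 1 / 2 := by
    rw [abs_mul, abs_mul, abs_of_nonneg hε]
    have := mul_le_mul hz hk (abs_nonneg k) ((abs_nonneg z).trans hz)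
    nlinarith [mul_le_mul_of_nonneg_left this hε]
  have hpos : 1 / 2 ≤ 1 + ε * z * k := by linarith [neg_abs_le (ε * z * k)]
  rw [abs_of_pos (inv_pos.2 (by linarith)), inv_le_comm₀ (by linarith) two_pos]
  linarith

theorem lpNorm_neg_pdz_pdz_add_le {m : ℕ} {ℓ κ₀ ε : ℝ} {Q : Set (Fin m → ℝ)}
    (hQ : MeasurableSet Q) {κ : Fin m → (Fin m → ℝ) → ℝ} (hκ : ∀ j, Measurable (κ j))
    (hκb : ∀ j, ∀ s ∈ Q, |κ j s| ≤ κ₀)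
    (hκ'b : ∀ j, ∀ s ∈ Q, |fderiv ℝ (κ j) s (Pi.single j 1)| ≤ κ₀) (hκ₀ : 0 ≤ κ₀)
    (hε : 0 < ε) (hεℓκ₀ : 2 * ε * ℓ * κ₀ ≤ 1) {u h : (Fin m → ℝ) × ℝ → ℝ}
    (hDs : ∀ j, MemLp (pds j u) 2 (volume.restrict (Q ×ˢ Ioo (-ℓ) ℓ)))
    (hDss : ∀ j, MemLp (pds j (pds j u)) 2 (volume.restrict (Q ×ˢ Ioo (-ℓ) ℓ)))
    (hDz : MemLp (pdz u) 2 (volume.restrict (Q ×ˢ Ioo (-ℓ) ℓ))) :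
    lpNorm (fun x => -(pdz (fun y => pdz u y) x) + h x) 2 (volume.restrict (Q ×ˢ Ioo (-ℓ) ℓ)) ≤
      ε * lpNorm (fun x => -(ε * lapTil ε κ u x) + ε⁻¹ * h x) 2
          (volume.restrict (Q ×ˢ Ioo (-ℓ) ℓ))
      + ε ^ 2 * (4 * ∑ j, lpNorm (pds j (pds j u)) 2 (volume.restrict (Q ×ˢ Ioo (-ℓ) ℓ)))
      + ε * (2 * κ₀ * ∑ _j : Fin m, lpNorm (pdz u) 2 (volume.restrict (Q ×ˢ Ioo (-ℓ) ℓ)))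
      + ε ^ 3 * (8 * κ₀ * ∑ j, lpNorm (pds j u) 2 (volume.restrict (Q ×ˢ Ioo (-ℓ) ℓ))) := by
  set Ω := Q ×ˢ Ioo (-ℓ) ℓ
  set μ := volume.restrict Ω
  have hΩ : MeasurableSet Ω := hQ.prod measurableSet_Ioo
  set A : Fin m → (Fin m → ℝ) × ℝ → ℝ := fun j x => (1 + ε * x.2 * κ j x.1)⁻¹
  have hA j : Measurable (A j) := by fun_prop
  have hA2 j : ∀ x ∈ Ω, |A j x| ≤ 2 := fun x hx =>
    abs_inv_one_add_mul_le_two hε.le (abs_le.2 ⟨hx.2.1.le, hx.2.2.le⟩) (hκb j x.1 hx.1) hεℓκ₀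
  have hsum {a f : Fin m → (Fin m → ℝ) × ℝ → ℝ} {c : ℝ} (hc : 0 ≤ c)
      (hf : ∀ j, MemLp (f j) 2 μ) (ha : ∀ j, Measurable (a j)) (hac : ∀ j, ∀ x ∈ Ω, |a j x| ≤ c) :
      MemLp (∑ j, a j * f j) 2 μ ∧ lpNorm (∑ j, a j * f j) 2 μ ≤ c * ∑ j, lpNorm (f j) 2 μ := by
    have hac' j : ∀ᵐ x ∂μ, |a j x| ≤ c := ae_restrict_of_forall_mem hΩ (hac j)
    exact ⟨memLp_finsetSum' _ fun j _ =>
        (hf j).mul_of_ae_abs_le (ha j).aestronglyMeasurable (hac' j),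
      lpNorm_sum_mul_le_of_ae_abs_le _ one_le_two hc (fun j _ => hf j)
        (fun j _ => (ha j).aestronglyMeasurable) fun j _ => hac' j⟩
  set T₁ := ∑ j, A j ^ 2 * pds j (pds j u)
  set T₂ := ∑ j, (fun x => κ j x.1 * A j x) * pdz u
  set T₃ := ∑ j, (fun x => fderiv ℝ (κ j) x.1 (Pi.single j 1) * A j x ^ 3) * pds j u
  have hT₁ : MemLp T₁ 2 μ ∧ lpNorm T₁ 2 μ ≤ 4 * ∑ j, lpNorm (pds j (pds j u)) 2 μ :=
    hsum (by norm_num) hDss (fun j => (hA j).pow_const 2) fun j x hx => by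
      rw [Pi.pow_apply, abs_pow]
      linarith [pow_le_pow_left₀ (abs_nonneg _) (hA2 j x hx) 2]
  have hT₂ : MemLp T₂ 2 μ ∧ lpNorm T₂ 2 μ ≤ 2 * κ₀ * ∑ _j : Fin m, lpNorm (pdz u) 2 μ :=
    hsum (by positivity) (fun _ => hDz) (fun j => by fun_prop) fun j x hx => by
      rw [abs_mul, mul_comm 2]
      exact mul_le_mul (hκb j x.1 hx.1) (hA2 j x hx) (abs_nonneg _) hκ₀
  have hT₃ : MemLp T₃ 2 μ ∧ lpNorm T₃ 2 μ ≤ 8 * κ₀ * ∑ j, lpNorm (pds j u) 2 μ :=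
    hsum (by positivity) hDs (fun j => by fun_prop) fun j x hx => by
      rw [abs_mul, abs_pow, mul_comm 8]
      exact mul_le_mul (hκ'b j x.1 hx.1)
        (by linarith [pow_le_pow_left₀ (abs_nonneg _) (hA2 j x hx) 3]) (by positivity) hκ₀
  have hdecomp : (fun x => -(pdz (fun y => pdz u y) x) + h x) =
      (fun x => ε * (-(ε * lapTil ε κ u x) + ε⁻¹ * h x)) + (fun x => ε ^ 2 * T₁ x)
        + (fun x => ε * T₂ x) + (fun x => -ε ^ 3 * T₃ x) := by
    funext x
    simpa [T₁, T₂, T₃, A, Finset.sum_apply] using neg_pdz_pdz_add_eq hε.ne' κ (h x) x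
  rw [hdecomp]
  calc _ ≤ lpNorm (fun x => ε * (-(ε * lapTil ε κ u x) + ε⁻¹ * h x)) 2 μ
        + lpNorm (fun x => ε ^ 2 * T₁ x) 2 μ + lpNorm (fun x => ε * T₂ x) 2 μ
        + lpNorm (fun x => -ε ^ 3 * T₃ x) 2 μ := by
        grw [lpNorm_add_le' (hT₃.1.const_mul _) one_le_two,
          lpNorm_add_le' (hT₂.1.const_mul _) one_le_two,
          lpNorm_add_le' (hT₁.1.const_mul _) one_le_two]
    _ ≤ _ := by
      simp only [lpNorm_const_mul, abs_neg, abs_pow, abs_of_pos hε]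
      gcongr
      exacts [hT₁.2, hT₂.2, hT₃.2]

theorem l2norm_neg_pdz_pdz_add_le {m : ℕ} {ℓ κ₀ ε : ℝ} {Q : Set (Fin m → ℝ)} (hQo : IsOpen Q)
    (hQb : IsBounded Q) {κ : Fin m → (Fin m → ℝ) → ℝ} (hκ : ∀ j, Continuous (κ j))
    (hκb : ∀ j, ∀ s ∈ Q, |κ j s| ≤ κ₀)
    (hκ'b : ∀ j, ∀ s ∈ Q, |fderiv ℝ (κ j) s (Pi.single j 1)| ≤ κ₀) (hκ₀ : 0 ≤ κ₀)
    {w : ℝ → ℝ} (hw : Continuous w) (hε : 0 < ε) (hεℓκ₀ : 2 * ε * ℓ * κ₀ ≤ 1)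
    {u : (Fin m → ℝ) × ℝ → ℝ} (hu : ContDiff ℝ 2 u) :
    l2norm (Q ×ˢ Ioo (-ℓ) ℓ) (fun x => -(pdz (fun y => pdz u y) x) + w (u x)) ≤
      ε * l2norm (Q ×ˢ Ioo (-ℓ) ℓ) (fun x => -(ε * lapTil ε κ u x) + ε⁻¹ * w (u x))
      + ε ^ 2 * (4 * ∑ j, l2norm (Q ×ˢ Ioo (-ℓ) ℓ) (fun x => pds j (fun y => pds j u y) x))
      + ε * (2 * κ₀ * ∑ _j : Fin m, l2norm (Q ×ˢ Ioo (-ℓ) ℓ) (fun x => pdz u x))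
      + ε ^ 3 * (8 * κ₀ * ∑ j, l2norm (Q ×ˢ Ioo (-ℓ) ℓ) (fun x => pds j u x)) := by
  have hL2 {f : (Fin m → ℝ) × ℝ → ℝ} (hf : Continuous f) :
      MemLp f 2 (volume.restrict (Q ×ˢ Ioo (-ℓ) ℓ)) :=
    hf.memLp_restrict_of_isBounded (hQb.prod (Metric.isBounded_Ioo _ _)) 2
  have hDs j : Continuous (pds j u) := (hu.pds (k := 0) (by norm_num) j).continuous
  have hDss j : Continuous (pds j (pds j u)) :=
    ((hu.pds (k := 1) (by norm_num) j).pds (k := 0) (by norm_num) j).continuous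
  have hDz : Continuous (pdz u) := (hu.pdz (k := 0) (by norm_num)).continuous
  have hDzz : Continuous (pdz (pdz u)) :=
    ((hu.pdz (k := 1) (by norm_num)).pdz (k := 0) (by norm_num)).continuous
  have hres : Continuous (fun x => -(pdz (fun y => pdz u y) x) + w (u x)) := by fun_prop
  have hg : Measurable (fun x => -(ε * lapTil ε κ u x) + ε⁻¹ * w (u x)) := by
    have := hu.continuous
    unfold lapTil
    fun_prop
  rw [l2norm_eq_lpNorm hres.aestronglyMeasurable, l2norm_eq_lpNorm hg.aestronglyMeasurable]
  simp (disch := fun_prop) only [l2norm_eq_lpNorm]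
  exact lpNorm_neg_pdz_pdz_add_le hQo.measurableSet (fun j => (hκ j).measurable) hκb hκ'b hκ₀
    hε hεℓκ₀ (fun j => hL2 (hDs j)) (fun j => hL2 (hDss j)) (hL2 hDz)

theorem stmt_4_general (n : ℕ) (ℓ κ₀ : ℝ) (hℓ : 0 < ℓ) (hκ₀ : 0 < κ₀)
    (Q : Set (Fin (n - 1) → ℝ)) (hQo : IsOpen Q) (hQb : Bornology.IsBounded Q)
    (κ : Fin (n - 1) → (Fin (n - 1) → ℝ) → ℝ) (hκ : ∀ j, ContDiff ℝ 1 (κ j))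
    (hκb : ∀ j, ∀ s ∈ Q, |κ j s| ≤ κ₀)
    (hκ'b : ∀ i j, ∀ s ∈ Q, |fderiv ℝ (κ j) s (Pi.single i 1)| ≤ κ₀)
    (W : ℝ → ℝ) (hW : ContDiff ℝ 1 W)
    (M C η₁ : ℝ) (hC : 0 < C) :
    ∃ M₂ > (0 : ℝ), ∀ ε : ℝ, 0 < ε → ε < 1 / (2 * ℓ * κ₀) →
      ∀ u : (Fin (n - 1) → ℝ) × ℝ → ℝ, ContDiff ℝ 2 u →
      l2norm (Q ×ˢ Set.Ioo (-ℓ) ℓ)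
          (fun x => -(ε * lapTil ε κ u x) + ε⁻¹ * deriv W (u x)) ≤ 2 * Real.sqrt M →
      l2norm (Q ×ˢ Set.Ioo (-ℓ) ℓ) (fun x => pdz u x) ≤ Real.sqrt (2 * M / η₁) →
      (∑ j, (l2norm (Q ×ˢ Set.Ioo (-ℓ) ℓ) (fun x => pds j u x)
          + ε * l2norm (Q ×ˢ Set.Ioo (-ℓ) ℓ) (fun x => pds j (fun y => pds j u y) x))) ≤ C →
      l2norm (Q ×ˢ Set.Ioo (-ℓ) ℓ)
          (fun x => -(pdz (fun y => pdz u y) x) + deriv W (u x)) ≤ M₂ * ε := by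
  set K := 1 / (2 * ℓ * κ₀)
  refine ⟨2 * √M + 4 * C + 2 * κ₀ * (n - 1 : ℕ) * √(2 * M / η₁) + 8 * κ₀ * K ^ 2 * C,
    by positivity, fun ε hε hεK u hu hg hz hs => ?_⟩
  have hεℓκ₀ : 2 * ε * ℓ * κ₀ ≤ 1 := by
    rw [lt_div_iff₀ (by positivity)] at hεK
    linarith
  have key := l2norm_neg_pdz_pdz_add_le hQo hQb (fun j => (hκ j).continuous) hκb
    (fun j => hκ'b j j) hκ₀.le (hW.continuous_deriv le_rfl) hε hεℓκ₀ hu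
  rw [Finset.sum_const, Finset.card_univ, Fintype.card_fin, nsmul_eq_mul] at key
  rw [Finset.sum_add_distrib, ← Finset.mul_sum] at hs
  set Lg := l2norm (Q ×ˢ Ioo (-ℓ) ℓ) (fun x => -(ε * lapTil ε κ u x) + ε⁻¹ * deriv W (u x))
  set Lz := l2norm (Q ×ˢ Ioo (-ℓ) ℓ) (fun x => pdz u x)
  set Ls := ∑ j, l2norm (Q ×ˢ Ioo (-ℓ) ℓ) (fun x => pds j u x)
  set Lss := ∑ j, l2norm (Q ×ˢ Ioo (-ℓ) ℓ) (fun x => pds j (fun y => pds j u y) x)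
  have hLs : 0 ≤ Ls := Finset.sum_nonneg fun _ _ => Real.sqrt_nonneg _
  have hLss : 0 ≤ ε * Lss := mul_nonneg hε.le (Finset.sum_nonneg fun _ _ => Real.sqrt_nonneg _)
  calc _ ≤ ε * Lg + ε ^ 2 * (4 * Lss) + ε * (2 * κ₀ * ((n - 1 : ℕ) * Lz))
        + ε ^ 3 * (8 * κ₀ * Ls) := key
    _ = ε * Lg + 4 * ε * (ε * Lss) + ε * (2 * κ₀ * ((n - 1 : ℕ) * Lz))
        + ε * ε ^ 2 * (8 * κ₀ * Ls) := by ring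
    _ ≤ ε * (2 * √M) + 4 * ε * C + ε * (2 * κ₀ * ((n - 1 : ℕ) * √(2 * M / η₁)))
        + ε * K ^ 2 * (8 * κ₀ * C) := by
      gcongr
      all_goals linarith
    _ = _ := by ring

/-- `O(ε)` residual bound for the bilayer equation under enhanced
tangential-derivative bounds. -/
theorem stmt_4 (n : ℕ) (hn : 2 ≤ n) (ℓ κ₀ : ℝ) (hℓ : 0 < ℓ) (hκ₀ : 0 < κ₀)
    (Q : Set (Fin (n - 1) → ℝ)) (hQo : IsOpen Q) (hQb : Bornology.IsBounded Q)
    (κ : Fin (n - 1) → (Fin (n - 1) → ℝ) → ℝ) (hκ : ∀ j, ContDiff ℝ 1 (κ j))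
    (hκb : ∀ j, ∀ s ∈ Q, |κ j s| ≤ κ₀)
    (hκ'b : ∀ i j, ∀ s ∈ Q, |fderiv ℝ (κ j) s (Pi.single i 1)| ≤ κ₀)
    (W : ℝ → ℝ) (hW : ContDiff ℝ 1 W)
    (M C η₁ : ℝ) (hM : 0 < M) (hC : 0 < C) (hη₁ : 0 < η₁) :
    ∃ M₂ > (0 : ℝ), ∀ ε : ℝ, 0 < ε → ε < 1 / (2 * ℓ * κ₀) →
      ∀ u : (Fin (n - 1) → ℝ) × ℝ → ℝ, ContDiff ℝ 2 u →
      l2norm (Q ×ˢ Set.Ioo (-ℓ) ℓ)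
          (fun x => -(ε * lapTil ε κ u x) + ε⁻¹ * deriv W (u x)) ≤ 2 * Real.sqrt M →
      l2norm (Q ×ˢ Set.Ioo (-ℓ) ℓ) (fun x => pdz u x) ≤ Real.sqrt (2 * M / η₁) →
      (∑ j, (l2norm (Q ×ˢ Set.Ioo (-ℓ) ℓ) (fun x => pds j u x)
          + ε * l2norm (Q ×ˢ Set.Ioo (-ℓ) ℓ) (fun x => pds j (fun y => pds j u y) x))) ≤ C →
      l2norm (Q ×ˢ Set.Ioo (-ℓ) ℓ)
          (fun x => -(pdz (fun y => pdz u y) x) + deriv W (u x)) ≤ M₂ * ε :=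
  stmt_4_general n ℓ κ₀ hℓ hκ₀ Q hQo hQb κ hκ hκb hκ'b W hW M C η₁ hC
end

section
/- Let D ⊆ ℝⁿ be a measurable set of finite Lebesgue measure, let p ≥ 2 and q ≥ p − 1 be real numbers, and let g : ℝ → ℝ be continuous with |g(v)| ≤ a·|v|^{p−1} + b for all v ∈ ℝ, where a, b ≥ 0. Suppose f_k, f : D → ℝ are measurable, f_k → f almost everywhere on D, f and each f_k belong to L^q(D), and ∫_D |f_k − f|^q → 0 as k → ∞. Then ∫_D |g(f_k) − g(f)|^{q/(p−1)} → 0 as k → ∞; that is, g(f_k) → g(f) strongly in L^{q/(p−1)}(D). -/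
/-!
The growth bound on `g` gives, with `r = q / (p - 1)`, the pointwise estimate
`|g u - g v| ^ r ≤ C |u - v| ^ q + C (|v| ^ q + 1)`. Hence `|g (f_k) - g f| ^ r` is dominated by
a term whose integral tends to zero plus a fixed integrable function. Truncating at the fixed
function and applying dominated convergence (the integrand tends to zero a.e. by continuity of
`g`) finishes the proof.
-/

open MeasureTheory Filter

lemma Real.add_rpow_le_two_rpow_mul_rpow_add_rpow {x y t : ℝ} (hx : 0 ≤ x) (hy : 0 ≤ y)
    (ht : 0 ≤ t) : (x + y) ^ t ≤ 2 ^ t * (x ^ t + y ^ t) := calc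
  (x + y) ^ t ≤ (2 * max x y) ^ t := by gcongr; rw [two_mul]; gcongr <;> simp
  _ = 2 ^ t * max x y ^ t := Real.mul_rpow zero_le_two (le_max_of_le_left hx)
  _ ≤ 2 ^ t * (x ^ t + y ^ t) := by
    gcongr
    rcases max_choice x y with h | h <;> rw [h] <;> simp [Real.rpow_nonneg, hx, hy]

lemma add_add_one_rpow_le {x y r : ℝ} (hx : 0 ≤ x) (hy : 0 ≤ y) (hr : 0 ≤ r) :
    (x + y + 1) ^ r ≤ 2 ^ r * 2 ^ r * (x ^ r + y ^ r + 1) := by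
  have h2r : 1 ≤ (2 : ℝ) ^ r := Real.one_le_rpow one_le_two hr
  have hxy : 0 ≤ x ^ r + y ^ r := by positivity
  calc (x + y + 1) ^ r ≤ 2 ^ r * ((x + y) ^ r + 1 ^ r) :=
        Real.add_rpow_le_two_rpow_mul_rpow_add_rpow (by positivity) zero_le_one hr
    _ ≤ 2 ^ r * (2 ^ r * (x ^ r + y ^ r) + 1) := by
        rw [Real.one_rpow]
        gcongr
        exact Real.add_rpow_le_two_rpow_mul_rpow_add_rpow hx hy hr
    _ ≤ 2 ^ r * 2 ^ r * (x ^ r + y ^ r + 1) := by nlinarith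

lemma abs_sub_le_of_abs_le_rpow_add {g : ℝ → ℝ} {a b s : ℝ} (ha : 0 ≤ a) (hb : 0 ≤ b)
    (hs : 0 ≤ s) (hg : ∀ v, |g v| ≤ a * |v| ^ s + b) (u v : ℝ) :
    |g u - g v| ≤ (a * (2 ^ s + 1) + 2 * b) * (|u - v| ^ s + |v| ^ s + 1) := by
  have hu : |u| ^ s ≤ 2 ^ s * (|u - v| ^ s + |v| ^ s) :=
    (Real.rpow_le_rpow (abs_nonneg u) (by simpa using abs_add_le (u - v) v) hs).trans
      (Real.add_rpow_le_two_rpow_mul_rpow_add_rpow (abs_nonneg _) (abs_nonneg _) hs)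
  have hX : 0 ≤ |u - v| ^ s := by positivity
  have hY : 0 ≤ |v| ^ s := by positivity
  have h2s : (0 : ℝ) ≤ 2 ^ s := by positivity
  calc |g u - g v| ≤ |g u| + |g v| := abs_sub _ _
    _ ≤ (a * |u| ^ s + b) + (a * |v| ^ s + b) := add_le_add (hg u) (hg v)
    _ ≤ a * (2 ^ s * (|u - v| ^ s + |v| ^ s)) + a * |v| ^ s + 2 * b := by
      linarith [mul_le_mul_of_nonneg_left hu ha]
    _ ≤ (a * (2 ^ s + 1) + 2 * b) * (|u - v| ^ s + |v| ^ s + 1) := by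
      nlinarith [mul_nonneg ha hX, mul_nonneg ha h2s, mul_nonneg hb hX, mul_nonneg hb hY]

lemma exists_abs_sub_rpow_le_of_abs_le {g : ℝ → ℝ} {a b s r : ℝ} (ha : 0 ≤ a) (hb : 0 ≤ b)
    (hs : 0 ≤ s) (hr : 0 ≤ r) (hg : ∀ v, |g v| ≤ a * |v| ^ s + b) :
    ∃ C, 0 ≤ C ∧ ∀ u v, |g u - g v| ^ r ≤ C * |u - v| ^ (s * r) + C * (|v| ^ (s * r) + 1) := by
  set K := a * (2 ^ s + 1) + 2 * b
  have hK : 0 ≤ K := by positivity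
  refine ⟨K ^ r * (2 ^ r * 2 ^ r), by positivity, fun u v => ?_⟩
  calc |g u - g v| ^ r ≤ (K * (|u - v| ^ s + |v| ^ s + 1)) ^ r :=
        Real.rpow_le_rpow (abs_nonneg _) (abs_sub_le_of_abs_le_rpow_add ha hb hs hg u v) hr
    _ = K ^ r * (|u - v| ^ s + |v| ^ s + 1) ^ r := Real.mul_rpow hK (by positivity)
    _ ≤ K ^ r * (2 ^ r * 2 ^ r * ((|u - v| ^ s) ^ r + (|v| ^ s) ^ r + 1)) := by
        gcongr
        exact add_add_one_rpow_le (by positivity) (by positivity) hr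
    _ = _ := by rw [← Real.rpow_mul (abs_nonneg _), ← Real.rpow_mul (abs_nonneg _)]; ring

lemma tendsto_integral_zero_of_le_add {α : Type*} [MeasurableSpace α] {μ : Measure α}
    {F E : ℕ → α → ℝ} {H : α → ℝ} (hF_meas : ∀ k, AEStronglyMeasurable (F k) μ)
    (hF_nonneg : ∀ k, 0 ≤ᵐ[μ] F k) (hE_nonneg : ∀ k, 0 ≤ᵐ[μ] E k) (hH_nonneg : 0 ≤ᵐ[μ] H)
    (hFEH : ∀ k, F k ≤ᵐ[μ] E k + H) (hE : ∀ k, Integrable (E k) μ) (hH : Integrable H μ)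
    (hF_lim : ∀ᵐ x ∂μ, Tendsto (fun k => F k x) atTop (nhds 0))
    (hE_lim : Tendsto (fun k => ∫ x, E k x ∂μ) atTop (nhds 0)) :
    Tendsto (fun k => ∫ x, F k x ∂μ) atTop (nhds 0) := by
  have hF_int : ∀ k, Integrable (F k) μ := fun k =>
    ((hE k).add hH).mono' (hF_meas k) <| by
      filter_upwards [hF_nonneg k, hFEH k] with x h0 h1
      rwa [Real.norm_of_nonneg h0]
  -- `F k ≤ min (F k) H + E k`, and the truncation `min (F k) H` is dominated by `H`.
  have h_trunc : Tendsto (fun k => ∫ x, (F k ⊓ H) x ∂μ) atTop (nhds 0) := by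
    simpa using tendsto_integral_of_dominated_convergence (f := 0) H
      (fun k => (hF_meas k).inf hH.aestronglyMeasurable) hH
      (fun k => by
        filter_upwards [hF_nonneg k, hH_nonneg] with x h0 hH0
        rw [Pi.inf_apply, Real.norm_of_nonneg (le_min h0 hH0)]
        exact min_le_right _ _)
      (by
        filter_upwards [hF_lim, hH_nonneg] with x hx hH0
        rw [Pi.zero_apply] at hH0
        simpa only [Pi.inf_apply, Pi.zero_apply, min_eq_left hH0] using
          hx.min (tendsto_const_nhds (x := H x)))
  refine squeeze_zero (fun k => integral_nonneg_of_ae (hF_nonneg k)) (fun k => ?_)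
    (by simpa only [add_zero] using h_trunc.add hE_lim)
  rw [← integral_add ((hF_int k).inf hH) (hE k)]
  refine integral_mono_ae (hF_int k) (((hF_int k).inf hH).add (hE k)) ?_
  filter_upwards [hE_nonneg k, hFEH k] with x hE0 h
  simp only [Pi.zero_apply, Pi.add_apply, Pi.inf_apply] at hE0 h ⊢
  rcases min_choice (F k x) (H x) with hm | hm <;> rw [hm] <;> linarith

lemma integrable_abs_rpow_iff_memLp {α : Type*} [MeasurableSpace α] {μ : Measure α} {f : α → ℝ}
    {q : ℝ} (hf : AEStronglyMeasurable f μ) (hq : 0 < q) :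
    Integrable (fun x => |f x| ^ q) μ ↔ MemLp f (ENNReal.ofReal q) μ := by
  have h := integrable_norm_rpow_iff hf (ENNReal.ofReal_pos.2 hq).ne' ENNReal.ofReal_ne_top
  simpa only [Real.norm_eq_abs, ENNReal.toReal_ofReal hq.le] using h

theorem stmt_7_general (n : ℕ) (D : Set (Fin n → ℝ)) (hDfin : volume D < ⊤)
    (p q : ℝ) (hp : 2 ≤ p) (hq : p - 1 ≤ q)
    (g : ℝ → ℝ) (hg : Continuous g) (a b : ℝ) (ha : 0 ≤ a) (hb : 0 ≤ b)
    (hgb : ∀ v : ℝ, |g v| ≤ a * |v| ^ (p - 1) + b)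
    (f : (Fin n → ℝ) → ℝ) (fk : ℕ → (Fin n → ℝ) → ℝ)
    (hfm : Measurable f) (hfkm : ∀ k, Measurable (fk k))
    (hae : ∀ᵐ x ∂(volume.restrict D), Tendsto (fun k => fk k x) atTop (nhds (f x)))
    (hfLq : IntegrableOn (fun x => |f x| ^ q) D)
    (hfkLq : ∀ k, IntegrableOn (fun x => |fk k x| ^ q) D)
    (hconv : Tendsto (fun k => ∫ x in D, |fk k x - f x| ^ q) atTop (nhds 0)) :
    Tendsto (fun k => ∫ x in D, |g (fk k x) - g (f x)| ^ (q / (p - 1))) atTop (nhds 0) := by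
  have hs : 0 < p - 1 := by linarith
  have hq0 : 0 < q := by linarith
  have hr : 0 < q / (p - 1) := div_pos hq0 hs
  obtain ⟨C, hC, hbound⟩ := exists_abs_sub_rpow_le_of_abs_le ha hb hs.le hr.le hgb
  rw [mul_div_cancel₀ q hs.ne'] at hbound
  have hdiff : ∀ k, IntegrableOn (fun x => |fk k x - f x| ^ q) D := fun k =>
    (integrable_abs_rpow_iff_memLp ((hfkm k).sub hfm).aestronglyMeasurable hq0).2 <|
      ((integrable_abs_rpow_iff_memLp (hfkm k).aestronglyMeasurable hq0).1 (hfkLq k)).sub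
        ((integrable_abs_rpow_iff_memLp hfm.aestronglyMeasurable hq0).1 hfLq)
  refine tendsto_integral_zero_of_le_add (E := fun k x => C * |fk k x - f x| ^ q)
    (H := fun x => C * (|f x| ^ q + 1)) (fun k => by fun_prop (disch := exact hr.le))
    (fun k => ae_of_all _ fun x => by positivity) (fun k => ae_of_all _ fun x => by positivity)
    (ae_of_all _ fun x => by positivity) (fun k => ae_of_all _ fun x => hbound _ _)
    (fun k => (hdiff k).const_mul C) ((hfLq.add (integrableOn_const hDfin.ne)).const_mul C) ?_
    (by simpa only [integral_const_mul, mul_zero] using hconv.const_mul C)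
  filter_upwards [hae] with x hx
  have h := ((hg.tendsto _).comp hx).sub_const (g (f x))
  rw [sub_self] at h
  have hcont : Continuous fun t : ℝ => |t| ^ (q / (p - 1)) := by fun_prop (disch := exact hr.le)
  simpa [Function.comp_def, Real.zero_rpow hr.ne'] using (hcont.tendsto 0).comp h

/-- generalized dominated convergence for the Nemytskii operator `g`:
`L^q` convergence plus a.e. convergence implies `g(f_k) → g(f)` in `L^{q/(p−1)}`. -/
theorem stmt_7 (n : ℕ) (D : Set (Fin n → ℝ)) (hD : MeasurableSet D) (hDfin : volume D < ⊤)
    (p q : ℝ) (hp : 2 ≤ p) (hq : p - 1 ≤ q)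
    (g : ℝ → ℝ) (hg : Continuous g) (a b : ℝ) (ha : 0 ≤ a) (hb : 0 ≤ b)
    (hgb : ∀ v : ℝ, |g v| ≤ a * |v| ^ (p - 1) + b)
    (f : (Fin n → ℝ) → ℝ) (fk : ℕ → (Fin n → ℝ) → ℝ)
    (hfm : Measurable f) (hfkm : ∀ k, Measurable (fk k))
    (hae : ∀ᵐ x ∂(volume.restrict D), Tendsto (fun k => fk k x) atTop (nhds (f x)))
    (hfLq : IntegrableOn (fun x => |f x| ^ q) D)
    (hfkLq : ∀ k, IntegrableOn (fun x => |fk k x| ^ q) D)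
    (hconv : Tendsto (fun k => ∫ x in D, |fk k x - f x| ^ q) atTop (nhds 0)) :
    Tendsto (fun k => ∫ x in D, |g (fk k x) - g (f x)| ^ (q / (p - 1))) atTop (nhds 0) :=
  stmt_7_general n D hDfin p q hp hq g hg a b ha hb hgb f fk hfm hfkm hae hfLq hfkLq hconv
end

section
/- Let n ≥ 2, ℓ > 0, κ₀ > 0 with 2ℓκ₀ < 1 admissible range, let Q ⊂ ℝ^{n−1} be a bounded measurable set, and let κ₁, …, κ_{n−1} : Q → ℝ be measurable with |κ_j(s)| ≤ κ₀ for all s ∈ Q and all j. Set H₀(s) := Σ_{j=1}^{n−1} κ_j(s) and, for ε > 0, J(s,z) := Π_{j=1}^{n−1} (1 + εzκ_j(s)). Let W : ℝ → ℝ be C¹ with W(0) = 0, and let u : ℝ^{n−1}×ℝ → ℝ be C² with u(s, ±ℓ) = 0 and (∂u/∂z)(s, ±ℓ) = 0 for every s ∈ Q. Then there is a constant C depending only on n and κ₀ such that for every ε with 0 < ε < 1/(2ℓκ₀), | (1/ε)·∫_{Q×(−ℓ,ℓ)} H₀(s)·(∂u/∂z)·(−∂²u/∂z² + W'(u))·J(s,z)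 ds dz | ≤ C·∫_{Q×(−ℓ,ℓ)} | (1/2)·(∂u/∂z)² − W(u) | ds dz. -/
open MeasureTheory

/-!
Along a normal fibre `z ↦ (s, z)` the equipartition defect `F = ½ (∂u/∂z)² − W(u)` has
`∂F/∂z = ∂u/∂z · (∂²u/∂z² − W'(u))`, so the integrand is `−H₀ · ∂F/∂z · J`. Because `F`
vanishes at `z = ±ℓ`, integrating by parts puts the derivative on the Jacobian
`J = ∏ⱼ (1 + ε z κⱼ)`, and `∂J/∂z = O(ε)` on `|z| ≤ ℓ` cancels the prefactor `1/ε`.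
Fubini then integrates the fibrewise bound over `Q`.
-/

open Set Finset

theorem abs_sum_le_card_mul {ι : Type*} {s : Finset ι} {f : ι → ℝ} {c : ℝ}
    (hf : ∀ i ∈ s, |f i| ≤ c) : |∑ i ∈ s, f i| ≤ #s * c := by
  simpa using (abs_sum_le_sum_abs f s).trans (sum_le_card_nsmul s _ c hf)

theorem abs_sum_prod_erase_mul_le {ι : Type*} [DecidableEq ι] {s : Finset ι} {f g : ι → ℝ}
    {A B : ℝ} (hf : ∀ i ∈ s, |f i| ≤ A) (hg : ∀ i ∈ s, |g i| ≤ B) :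
    |∑ i ∈ s, (∏ j ∈ s.erase i, f j) * g i| ≤ #s * (A ^ (#s - 1) * B) := by
  refine abs_sum_le_card_mul fun i hi => ?_
  have hprod : |∏ j ∈ s.erase i, f j| ≤ A ^ (#s - 1) := by
    rw [abs_prod, ← card_erase_of_mem hi, ← prod_const]
    exact prod_le_prod (fun _ _ => abs_nonneg _) fun j hj => hf j (mem_of_mem_erase hj)
  rw [abs_mul]
  exact mul_le_mul hprod (hg i hi) (abs_nonneg _) (pow_nonneg ((abs_nonneg _).trans (hf i hi)) _)

theorem abs_one_add_mul_mul_le_two {ε z c ℓ κ₀ : ℝ} (hε : 0 ≤ ε) (hz : |z| ≤ ℓ) (hc : |c| ≤ κ₀)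
    (hεℓκ₀ : ε * ℓ * κ₀ ≤ 1) : |1 + ε * z * c| ≤ 2 := by
  have hεz : ε * |z| ≤ ε * ℓ := mul_le_mul_of_nonneg_left hz hε
  have : ε * |z| * |c| ≤ ε * ℓ * κ₀ :=
    mul_le_mul hεz hc (abs_nonneg _) ((mul_nonneg hε (abs_nonneg _)).trans hεz)
  calc |1 + ε * z * c| ≤ 1 + ε * |z| * |c| := by
        simpa [abs_mul, abs_of_nonneg hε] using abs_add_le 1 (ε * z * c)
    _ ≤ 2 := by linarith

theorem abs_prod_one_add_mul_mul_le {ι : Type*} {s : Finset ι} {c : ι → ℝ} {ε z ℓ κ₀ : ℝ}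
    (hε : 0 ≤ ε) (hz : |z| ≤ ℓ) (hc : ∀ i ∈ s, |c i| ≤ κ₀) (hεℓκ₀ : ε * ℓ * κ₀ ≤ 1) :
    |∏ i ∈ s, (1 + ε * z * c i)| ≤ 2 ^ #s := by
  rw [abs_prod, ← prod_const]
  exact prod_le_prod (fun _ _ => abs_nonneg _) fun i hi =>
    abs_one_add_mul_mul_le_two hε hz (hc i hi) hεℓκ₀

theorem hasDerivAt_prod_one_add_mul_mul {ι : Type*} [DecidableEq ι] (s : Finset ι) (ε : ℝ)
    (c : ι → ℝ) (z : ℝ) :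
    HasDerivAt (fun z => ∏ i ∈ s, (1 + ε * z * c i))
      (∑ i ∈ s, (∏ j ∈ s.erase i, (1 + ε * z * c j)) * (ε * c i)) z := by
  simpa only [smul_eq_mul, id] using HasDerivAt.fun_finsetProd fun i _ =>
    (((hasDerivAt_id z).const_mul ε).mul_const (c i)).const_add 1 |>.congr_deriv (by simp)

theorem abs_sum_prod_erase_one_add_mul_mul_le {ι : Type*} [DecidableEq ι] {s : Finset ι}
    {c : ι → ℝ} {ε z ℓ κ₀ : ℝ} (hε : 0 ≤ ε) (hz : |z| ≤ ℓ) (hc : ∀ i ∈ s, |c i| ≤ κ₀)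
    (hεℓκ₀ : ε * ℓ * κ₀ ≤ 1) :
    |∑ i ∈ s, (∏ j ∈ s.erase i, (1 + ε * z * c j)) * (ε * c i)| ≤ #s * (2 ^ (#s - 1) * (ε * κ₀)) :=
  abs_sum_prod_erase_mul_le (fun i hi => abs_one_add_mul_mul_le_two hε hz (hc i hi) hεℓκ₀)
    fun i hi => by rw [abs_mul, abs_of_nonneg hε]; exact mul_le_mul_of_nonneg_left (hc i hi) hε

theorem abs_intervalIntegral_deriv_mul_le {a b K : ℝ} (hab : a ≤ b) {F F' J J' : ℝ → ℝ}
    (hF : ∀ t ∈ Icc a b, HasDerivAt F (F' t) t) (hJ : ∀ t ∈ Icc a b, HasDerivAt J (J' t) t)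
    (hF' : IntervalIntegrable F' volume a b) (hJ' : IntervalIntegrable J' volume a b)
    (hFa : F a = 0) (hFb : F b = 0) (hJ'K : ∀ t ∈ Icc a b, |J' t| ≤ K) :
    |∫ t in a..b, F' t * J t| ≤ K * ∫ t in a..b, |F t| := by
  have hparts : ∫ t in a..b, F' t * J t = -∫ t in a..b, J' t * F t := by
    simp only [mul_comm (F' _)]
    rw [intervalIntegral.integral_mul_deriv_eq_deriv_mul (by rwa [uIcc_of_le hab])
      (by rwa [uIcc_of_le hab]) hJ' hF', hFa, hFb]
    ring
  have hFc : ContinuousOn F (Icc a b) := fun t ht => (hF t ht).continuousAt.continuousWithinAt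
  rw [hparts, abs_neg, ← Real.norm_eq_abs, ← intervalIntegral.integral_const_mul]
  refine intervalIntegral.norm_integral_le_of_norm_le hab (ae_of_all _ fun t ht => ?_)
    ((hFc.abs.intervalIntegrable_of_Icc hab).const_mul K)
  rw [Real.norm_eq_abs, abs_mul]
  exact mul_le_mul_of_nonneg_right (hJ'K t (Ioc_subset_Icc_self ht)) (abs_nonneg _)

theorem abs_setIntegral_prod_le {α β : Type*} [MeasurableSpace α] [MeasurableSpace β]
    {μ : Measure α} {ν : Measure β} [SFinite μ] [SFinite ν] {f g : α × β → ℝ} {s : Set α}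
    {t : Set β} {C : ℝ} (hs : MeasurableSet s) (hf : IntegrableOn f (s ×ˢ t) (μ.prod ν))
    (hg : IntegrableOn g (s ×ˢ t) (μ.prod ν))
    (hfg : ∀ x ∈ s, |∫ y in t, f (x, y) ∂ν| ≤ C * ∫ y in t, g (x, y) ∂ν) :
    |∫ z in s ×ˢ t, f z ∂μ.prod ν| ≤ C * ∫ z in s ×ˢ t, g z ∂μ.prod ν := by
  have hg' : Integrable (fun x => C * ∫ y in t, g (x, y) ∂ν) (μ.restrict s) := by
    rw [IntegrableOn, ← Measure.prod_restrict] at hg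
    exact hg.integral_prod_left.const_mul C
  rw [setIntegral_prod f hf, setIntegral_prod g hg, ← integral_const_mul]
  calc |∫ x in s, ∫ y in t, f (x, y) ∂ν ∂μ| ≤ ∫ x in s, |∫ y in t, f (x, y) ∂ν| ∂μ :=
        abs_integral_le_integral_abs
    _ ≤ ∫ x in s, C * ∫ y in t, g (x, y) ∂ν ∂μ :=
        integral_mono_of_nonneg (ae_of_all _ fun _ => abs_nonneg _) hg'
          (ae_restrict_of_forall_mem hs hfg)

section NormalFibres

variable {m : ℕ}

theorem contDiff_pdz {k : WithTop ℕ∞} {u : (Fin m → ℝ) × ℝ → ℝ} (hu : ContDiff ℝ (k + 1) u) :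
    ContDiff ℝ k (pdz u) :=
  (hu.fderiv_right le_rfl).clm_apply contDiff_const

theorem hasDerivAt_pdz {f : (Fin m → ℝ) × ℝ → ℝ} {s : Fin m → ℝ} {z : ℝ}
    (hf : DifferentiableAt ℝ f (s, z)) : HasDerivAt (fun t => f (s, t)) (pdz f (s, z)) z :=
  hf.hasFDerivAt.comp_hasDerivAt z ((hasDerivAt_const z s).prodMk (hasDerivAt_id z))

theorem continuous_pdz_pdz {u : (Fin m → ℝ) × ℝ → ℝ} (hu : ContDiff ℝ 2 u) :
    Continuous (pdz (pdz u)) :=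
  (contDiff_pdz (k := 0) (contDiff_pdz hu)).continuous

noncomputable def equipartitionDefect (W : ℝ → ℝ) (u : (Fin m → ℝ) × ℝ → ℝ)
    (x : (Fin m → ℝ) × ℝ) : ℝ :=
  (1 / 2) * (pdz u x) ^ 2 - W (u x)

noncomputable def curvatureCrossTerm (κ : Fin m → (Fin m → ℝ) → ℝ) (W : ℝ → ℝ)
    (u : (Fin m → ℝ) × ℝ → ℝ) (ε : ℝ) (x : (Fin m → ℝ) × ℝ) : ℝ :=
  (∑ j, κ j x.1) * pdz u x * (-(pdz (fun y => pdz u y) x) + deriv W (u x))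
    * (∏ j, (1 + ε * x.2 * κ j x.1))

variable {u : (Fin m → ℝ) × ℝ → ℝ} {W : ℝ → ℝ}

theorem equipartitionDefect_eq_zero {x : (Fin m → ℝ) × ℝ} (hW0 : W 0 = 0) (hu : u x = 0)
    (hpdz : pdz u x = 0) : equipartitionDefect W u x = 0 := by
  simp [equipartitionDefect, hu, hpdz, hW0]

theorem continuous_equipartitionDefect (hu : ContDiff ℝ 2 u) (hW : Continuous W) :
    Continuous (equipartitionDefect W u) :=
  (continuous_const.mul ((contDiff_pdz (k := 1) hu).continuous.pow 2)).sub
    (hW.comp hu.continuous)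

theorem hasDerivAt_equipartitionDefect (hu : ContDiff ℝ 2 u) (hW : ContDiff ℝ 1 W)
    (s : Fin m → ℝ) (z : ℝ) :
    HasDerivAt (fun t => equipartitionDefect W u (s, t))
      (pdz u (s, z) * (pdz (pdz u) (s, z) - deriv W (u (s, z)))) z := by
  have hpdz : HasDerivAt (fun t => pdz u (s, t)) (pdz (pdz u) (s, z)) z :=
    hasDerivAt_pdz (((contDiff_pdz (k := 1) hu).differentiable one_ne_zero) _)
  have hu' : HasDerivAt (fun t => u (s, t)) (pdz u (s, z)) z :=
    hasDerivAt_pdz ((hu.differentiable two_ne_zero) _)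
  have hW' : HasDerivAt W (deriv W (u (s, z))) (u (s, z)) :=
    ((hW.differentiable one_ne_zero) _).hasDerivAt
  exact ((hpdz.pow 2).const_mul (1 / 2)).sub (hW'.comp z hu') |>.congr_deriv (by ring)

theorem abs_integral_curvatureCrossTerm_slice_le {κ : Fin m → (Fin m → ℝ) → ℝ}
    {s : Fin m → ℝ} {ℓ κ₀ ε : ℝ} (hu : ContDiff ℝ 2 u) (hW : ContDiff ℝ 1 W) (hℓ : 0 ≤ ℓ)
    (hε : 0 ≤ ε) (hεℓκ₀ : ε * ℓ * κ₀ ≤ 1) (hκ : ∀ j, |κ j s| ≤ κ₀)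
    (hleft : equipartitionDefect W u (s, -ℓ) = 0) (hright : equipartitionDefect W u (s, ℓ) = 0) :
    |∫ z in Ioo (-ℓ) ℓ, curvatureCrossTerm κ W u ε (s, z)|
      ≤ ε * (m ^ 2 * κ₀ ^ 2 * 2 ^ (m - 1)) *
          ∫ z in Ioo (-ℓ) ℓ, |equipartitionDefect W u (s, z)| := by
  set H := ∑ j, κ j s
  set F' := fun t => pdz u (s, t) * (pdz (pdz u) (s, t) - deriv W (u (s, t)))
  set J := fun t => ∏ j, (1 + ε * t * κ j s)
  set J' := fun t => ∑ i, (∏ j ∈ univ.erase i, (1 + ε * t * κ j s)) * (ε * κ i s)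
  have hH : |H| ≤ m * κ₀ := by simpa using abs_sum_le_card_mul (s := univ) fun j _ => hκ j
  have hJ' : ∀ t ∈ Icc (-ℓ) ℓ, |J' t| ≤ m * (2 ^ (m - 1) * (ε * κ₀)) := fun t ht => by
    simpa using abs_sum_prod_erase_one_add_mul_mul_le (s := univ) hε (abs_le.2 ht)
      (fun j _ => hκ j) hεℓκ₀
  have hF'c : Continuous F' := by
    have := hu.continuous
    have := (contDiff_pdz (k := 1) hu).continuous
    have := continuous_pdz_pdz hu
    have := hW.continuous_deriv le_rfl
    fun_prop
  have hJ'c : Continuous J' := by fun_prop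
  have hparts := abs_intervalIntegral_deriv_mul_le (neg_le_self hℓ)
    (fun t _ => hasDerivAt_equipartitionDefect hu hW s t)
    (fun t _ => hasDerivAt_prod_one_add_mul_mul univ ε (fun j => κ j s) t)
    (hF'c.intervalIntegrable _ _) (hJ'c.intervalIntegrable _ _) hleft hright hJ'
  have hcross : ∀ z, curvatureCrossTerm κ W u ε (s, z) = -H * (F' z * J z) := fun z => by
    simp only [curvatureCrossTerm, H, F', J]; ring
  simp_rw [hcross, ← integral_Ioc_eq_integral_Ioo,
    ← intervalIntegral.integral_of_le (neg_le_self hℓ), intervalIntegral.integral_const_mul,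
    abs_mul, abs_neg]
  calc |H| * |∫ t in -ℓ..ℓ, F' t * J t|
      ≤ (m * κ₀) * (m * (2 ^ (m - 1) * (ε * κ₀)) *
          ∫ t in -ℓ..ℓ, |equipartitionDefect W u (s, t)|) :=
        mul_le_mul hH hparts (abs_nonneg _) ((abs_nonneg _).trans hH)
    _ = _ := by ring

theorem integrableOn_abs_equipartitionDefect (hu : ContDiff ℝ 2 u) (hW : Continuous W)
    {K : Set ((Fin m → ℝ) × ℝ)} (hK : Bornology.IsBounded K) :
    IntegrableOn (fun x => |equipartitionDefect W u x|) K :=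
  ((continuous_equipartitionDefect hu hW).abs.continuousOn.integrableOn_compact
    hK.isCompact_closure).mono_set subset_closure

theorem integrableOn_curvatureCrossTerm {κ : Fin m → (Fin m → ℝ) → ℝ} {Q : Set (Fin m → ℝ)}
    {ℓ κ₀ ε : ℝ} (hu : ContDiff ℝ 2 u) (hW : ContDiff ℝ 1 W) (hκm : ∀ j, Measurable (κ j))
    (hQm : MeasurableSet Q) (hQb : Bornology.IsBounded Q) (hκb : ∀ j, ∀ s ∈ Q, |κ j s| ≤ κ₀)
    (hε : 0 ≤ ε) (hεℓκ₀ : ε * ℓ * κ₀ ≤ 1) :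
    IntegrableOn (curvatureCrossTerm κ W u ε) (Q ×ˢ Ioo (-ℓ) ℓ) := by
  have hbox : Bornology.IsBounded (Q ×ˢ Ioo (-ℓ) ℓ) := hQb.prod (Metric.isBounded_Ioo _ _)
  have hmem : ∀ᵐ x ∂(volume.restrict (Q ×ˢ Ioo (-ℓ) ℓ)), x ∈ Q ×ˢ Ioo (-ℓ) ℓ :=
    ae_restrict_mem (hQm.prod measurableSet_Ioo)
  set G := fun x => pdz u x * (-(pdz (fun y => pdz u y) x) + deriv W (u x))
  have hG : IntegrableOn G (Q ×ˢ Ioo (-ℓ) ℓ) := by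
    have := (contDiff_pdz (k := 1) hu).continuous
    have := continuous_pdz_pdz hu
    have := hW.continuous_deriv le_rfl
    have hGc : Continuous G := by simp only [G]; fun_prop
    exact (hGc.continuousOn.integrableOn_compact hbox.isCompact_closure).mono_set subset_closure
  have hHm : Measurable fun x : (Fin m → ℝ) × ℝ => ∑ j, κ j x.1 := by fun_prop
  have hJm : Measurable fun x : (Fin m → ℝ) × ℝ => ∏ j, (1 + ε * x.2 * κ j x.1) := by fun_prop
  have hH := hG.bdd_mul (c := m * κ₀) hHm.aestronglyMeasurable (hmem.mono fun x hx => by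
    simpa using abs_sum_le_card_mul (s := univ) fun j _ => hκb j x.1 hx.1)
  refine (hH.mul_bdd (c := 2 ^ m) hJm.aestronglyMeasurable (hmem.mono fun x hx => ?_)).congr
    (ae_of_all _ fun x => ?_)
  · simpa [abs_prod] using abs_prod_one_add_mul_mul_le (s := univ) hε
      (abs_le.2 ⟨hx.2.1.le, hx.2.2.le⟩) (fun j _ => hκb j x.1 hx.1) hεℓκ₀
  · simp only [curvatureCrossTerm, G]; ring

end NormalFibres

theorem stmt_9_general (n : ℕ) (ℓ κ₀ : ℝ) (hℓ : 0 < ℓ) (hκ₀ : 0 < κ₀)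
    (Q : Set (Fin (n - 1) → ℝ)) (hQm : MeasurableSet Q) (hQb : Bornology.IsBounded Q)
    (κ : Fin (n - 1) → (Fin (n - 1) → ℝ) → ℝ) (hκm : ∀ j, Measurable (κ j))
    (hκb : ∀ j, ∀ s ∈ Q, |κ j s| ≤ κ₀)
    (W : ℝ → ℝ) (hW : ContDiff ℝ 1 W) (hW0 : W 0 = 0)
    (u : (Fin (n - 1) → ℝ) × ℝ → ℝ) (hu : ContDiff ℝ 2 u)
    (hbc : ∀ s ∈ Q, u (s, -ℓ) = 0 ∧ u (s, ℓ) = 0 ∧ pdz u (s, -ℓ) = 0 ∧ pdz u (s, ℓ) = 0) :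
    ∃ C : ℝ, 0 < C ∧ ∀ ε : ℝ, 0 < ε → ε < 1 / (2 * ℓ * κ₀) →
      |ε⁻¹ * ∫ x in Q ×ˢ Set.Ioo (-ℓ) ℓ,
          (∑ j, κ j x.1) * pdz u x * (-(pdz (fun y => pdz u y) x) + deriv W (u x))
            * (∏ j, (1 + ε * x.2 * κ j x.1))|
        ≤ C * ∫ x in Q ×ˢ Set.Ioo (-ℓ) ℓ, |(1 / 2) * (pdz u x) ^ 2 - W (u x)| := by
  set C₀ : ℝ := ((n - 1 : ℕ) : ℝ) ^ 2 * κ₀ ^ 2 * 2 ^ (n - 1 - 1)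
  refine ⟨C₀ + 1, by positivity, fun ε hε hεlt => ?_⟩
  have hεℓκ₀ : ε * ℓ * κ₀ ≤ 1 := by
    rw [lt_div_iff₀ (by positivity)] at hεlt
    linarith
  have hbound := abs_setIntegral_prod_le hQm
    (integrableOn_curvatureCrossTerm hu hW hκm hQm hQb hκb hε.le hεℓκ₀)
    (integrableOn_abs_equipartitionDefect hu hW.continuous (hQb.prod (Metric.isBounded_Ioo _ _)))
    fun s hs => abs_integral_curvatureCrossTerm_slice_le hu hW hℓ.le hε.le hεℓκ₀
      (fun j => hκb j s hs) (equipartitionDefect_eq_zero hW0 (hbc s hs).1 (hbc s hs).2.2.1)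
      (equipartitionDefect_eq_zero hW0 (hbc s hs).2.1 (hbc s hs).2.2.2)
  change |ε⁻¹ * ∫ x in Q ×ˢ Ioo (-ℓ) ℓ, curvatureCrossTerm κ W u ε x|
    ≤ (C₀ + 1) * ∫ x in Q ×ˢ Ioo (-ℓ) ℓ, |equipartitionDefect W u x|
  have hdefect : 0 ≤ ∫ x in Q ×ˢ Ioo (-ℓ) ℓ, |equipartitionDefect W u x| :=
    setIntegral_nonneg (hQm.prod measurableSet_Ioo) fun _ _ => abs_nonneg _
  rw [abs_mul, abs_inv, abs_of_pos hε]
  calc ε⁻¹ * |∫ x in Q ×ˢ Ioo (-ℓ) ℓ, curvatureCrossTerm κ W u ε x|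
      ≤ ε⁻¹ * (ε * C₀ * ∫ x in Q ×ˢ Ioo (-ℓ) ℓ, |equipartitionDefect W u x|) :=
        mul_le_mul_of_nonneg_left hbound (inv_nonneg.2 hε.le)
    _ = C₀ * ∫ x in Q ×ˢ Ioo (-ℓ) ℓ, |equipartitionDefect W u x| := by field_simp
    _ ≤ (C₀ + 1) * ∫ x in Q ×ˢ Ioo (-ℓ) ℓ, |equipartitionDefect W u x| := by gcongr; linarith

/-- bound for the curvature cross term `I₃` by the equipartition defect. -/
theorem stmt_9 (n : ℕ) (hn : 2 ≤ n) (ℓ κ₀ : ℝ) (hℓ : 0 < ℓ) (hκ₀ : 0 < κ₀)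
    (hadm : 2 * ℓ * κ₀ < 1)
    (Q : Set (Fin (n - 1) → ℝ)) (hQm : MeasurableSet Q) (hQb : Bornology.IsBounded Q)
    (κ : Fin (n - 1) → (Fin (n - 1) → ℝ) → ℝ) (hκm : ∀ j, Measurable (κ j))
    (hκb : ∀ j, ∀ s ∈ Q, |κ j s| ≤ κ₀)
    (W : ℝ → ℝ) (hW : ContDiff ℝ 1 W) (hW0 : W 0 = 0)
    (u : (Fin (n - 1) → ℝ) × ℝ → ℝ) (hu : ContDiff ℝ 2 u)
    (hbc : ∀ s ∈ Q, u (s, -ℓ) = 0 ∧ u (s, ℓ) = 0 ∧ pdz u (s, -ℓ) = 0 ∧ pdz u (s, ℓ) = 0) :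
    ∃ C : ℝ, 0 < C ∧ ∀ ε : ℝ, 0 < ε → ε < 1 / (2 * ℓ * κ₀) →
      |ε⁻¹ * ∫ x in Q ×ˢ Set.Ioo (-ℓ) ℓ,
          (∑ j, κ j x.1) * pdz u x * (-(pdz (fun y => pdz u y) x) + deriv W (u x))
            * (∏ j, (1 + ε * x.2 * κ j x.1))|
        ≤ C * ∫ x in Q ×ˢ Set.Ioo (-ℓ) ℓ, |(1 / 2) * (pdz u x) ^ 2 - W (u x)| :=
  stmt_9_general n ℓ κ₀ hℓ hκ₀ Q hQm hQb κ hκm hκb W hW hW0 u hu hbc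
end

section
/- Let n ≥ 2, let W : ℝ → ℝ be C¹ with W(0) = 0, let R₀ > 0, and let U : [0, ∞) → ℝ be C¹ on [0, ∞) and C² on (0, ∞), with U(R) = 0 for all R ≥ R₀, satisfying the codimension-n profile equation U''(R) + ((n−1)/R)·U'(R) = W'(U(R)) for all R > 0. Then for every R > 0, (1/2)·U'(R)² − (n−1)·∫_R^∞ U'(s)²/s ds = W(U(R)). -/
open MeasureTheory Set

/-! Multiplying the profile equation by `U'` gives
`(½ U'² - W(U))' = -(n - 1) U'² / R`. Integrating from `R` to any `T > R₀`, where `U` and `U'`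
vanish and `W(0) = 0`, yields the identity. -/

theorem setIntegral_Ioi_eq_intervalIntegral_of_eq_zero {f : ℝ → ℝ} {a b : ℝ} (hab : a ≤ b)
    (hf : ∀ x, b < x → f x = 0) : ∫ x in Ioi a, f x = ∫ x in a..b, f x := by
  rw [intervalIntegral.integral_of_le hab]
  refine setIntegral_eq_of_subset_of_forall_sdiff_eq_zero measurableSet_Ioi Ioc_subset_Ioi_self ?_
  rintro x ⟨hxa, hxb⟩
  exact hf x (lt_of_not_ge fun hle => hxb ⟨hxa, hle⟩)

theorem deriv_eq_zero_of_forall_ge_eq_zero {f : ℝ → ℝ} {a x : ℝ} (hf : ∀ y, a ≤ y → f y = 0)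
    (hx : a < x) : deriv f x = 0 := by
  have hloc : f =ᶠ[nhds x] fun _ => 0 :=
    Filter.eventually_of_mem (Ioi_mem_nhds hx) fun y hy => hf y (le_of_lt hy)
  rw [hloc.deriv_eq, deriv_const]

section RadialEnergy

variable {W U : ℝ → ℝ} {c : ℝ}

theorem hasDerivAt_radialEnergy (hW : Differentiable ℝ W) (hU : ContDiffOn ℝ 2 U (Ioi 0))
    (hODE : ∀ R : ℝ, 0 < R → deriv (deriv U) R + (c / R) * deriv U R = deriv W (U R))
    {x : ℝ} (hx : 0 < x) :
    HasDerivAt (fun y => (1 / 2) * deriv U y ^ 2 - W (U y)) (-(c * (deriv U x ^ 2 / x))) x := by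
  have hnhds : Ioi (0 : ℝ) ∈ nhds x := Ioi_mem_nhds hx
  have hU' : HasDerivAt U (deriv U x) x :=
    ((hU.contDiffAt hnhds).differentiableAt two_ne_zero).hasDerivAt
  have hU'' : HasDerivAt (deriv U) (deriv (deriv U) x) x :=
    (((hU.deriv_of_isOpen isOpen_Ioi (by norm_num : (1 : WithTop ℕ∞) + 1 ≤ 2)).contDiffAt
      hnhds).differentiableAt one_ne_zero).hasDerivAt
  refine (((hU''.pow 2).const_mul (1 / 2)).sub ((hW (U x)).hasDerivAt.comp x hU')).congr_deriv ?_
  have hU''x : deriv (deriv U) x = deriv W (U x) - c / x * deriv U x := by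
    linarith [hODE x hx]
  rw [hU''x]
  field_simp
  ring

theorem radialEnergy_sub (hW : Differentiable ℝ W) (hU : ContDiffOn ℝ 2 U (Ioi 0))
    (hODE : ∀ R : ℝ, 0 < R → deriv (deriv U) R + (c / R) * deriv U R = deriv W (U R))
    {a b : ℝ} (ha : 0 < a) (hb : 0 < b) :
    ((1 / 2) * deriv U b ^ 2 - W (U b)) - ((1 / 2) * deriv U a ^ 2 - W (U a))
      = -(c * ∫ s in a..b, deriv U s ^ 2 / s) := by
  have hpos : ∀ x ∈ uIcc a b, 0 < x := fun x hx =>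
    lt_of_lt_of_le (lt_min ha hb) hx.1
  have hcont : ContinuousOn (fun s => deriv U s ^ 2 / s) (uIcc a b) :=
    (((hU.deriv_of_isOpen isOpen_Ioi (by norm_num : (1 : WithTop ℕ∞) + 1 ≤ 2)).continuousOn.mono
      fun x hx => hpos x hx).pow 2).div continuousOn_id fun x hx => (hpos x hx).ne'
  rw [← intervalIntegral.integral_const_mul, ← intervalIntegral.integral_neg]
  exact (intervalIntegral.integral_eq_sub_of_hasDerivAt
    (fun x hx => hasDerivAt_radialEnergy hW hU hODE (hpos x hx))
    ((hcont.intervalIntegrable.const_mul c).neg)).symm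

end RadialEnergy

theorem stmt_11_general (n : ℕ)
    (W : ℝ → ℝ) (hW : ContDiff ℝ 1 W) (hW0 : W 0 = 0)
    (R₀ : ℝ) (U : ℝ → ℝ)
    (hU2 : ContDiffOn ℝ 2 U (Set.Ioi 0))
    (hUsupp : ∀ R : ℝ, R₀ ≤ R → U R = 0)
    (hODE : ∀ R : ℝ, 0 < R →
      deriv (deriv U) R + ((n - 1 : ℝ) / R) * deriv U R = deriv W (U R)) :
    ∀ R : ℝ, 0 < R →
      (1 / 2) * (deriv U R) ^ 2 - (n - 1 : ℝ) * (∫ s in Set.Ioi R, (deriv U s) ^ 2 / s)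
        = W (U R) := by
  intro R hR
  set T := max R R₀ + 1
  have hRT : R ≤ T := by linarith [le_max_left R R₀]
  have hR₀T : R₀ < T := by linarith [le_max_right R R₀]
  have hUT : U T = 0 := hUsupp T hR₀T.le
  have hU'T : deriv U T = 0 := deriv_eq_zero_of_forall_ge_eq_zero hUsupp hR₀T
  have htail : ∫ s in Ioi R, deriv U s ^ 2 / s = ∫ s in R..T, deriv U s ^ 2 / s :=
    setIntegral_Ioi_eq_intervalIntegral_of_eq_zero hRT fun s hs => by
      rw [deriv_eq_zero_of_forall_ge_eq_zero hUsupp (hR₀T.trans hs)]; simp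
  have henergy := radialEnergy_sub (hW.differentiable one_ne_zero) hU2 hODE hR (hR.trans_le hRT)
  rw [hUT, hU'T, hW0] at henergy
  rw [htail]
  linarith

/-- first integral identity for the codimension-`n` micelle profile. -/
theorem stmt_11 (n : ℕ) (hn : 2 ≤ n)
    (W : ℝ → ℝ) (hW : ContDiff ℝ 1 W) (hW0 : W 0 = 0)
    (R₀ : ℝ) (hR₀ : 0 < R₀) (U : ℝ → ℝ)
    (hU1 : ContDiffOn ℝ 1 U (Set.Ici 0)) (hU2 : ContDiffOn ℝ 2 U (Set.Ioi 0))
    (hUsupp : ∀ R : ℝ, R₀ ≤ R → U R = 0)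
    (hODE : ∀ R : ℝ, 0 < R →
      deriv (deriv U) R + ((n - 1 : ℝ) / R) * deriv U R = deriv W (U R)) :
    ∀ R : ℝ, 0 < R →
      (1 / 2) * (deriv U R) ^ 2 - (n - 1 : ℝ) * (∫ s in Set.Ioi R, (deriv U s) ^ 2 / s)
        = W (U R) :=
  stmt_11_general n W hW hW0 R₀ U hU2 hUsupp hODE
end

section
/- Let n ≥ 2, let W : ℝ → ℝ be C¹ with W(0) = 0, let R₀ > 0, and let U : [0, ∞) → ℝ be C² with U'(0) = 0 and U(R) = 0 for all R ≥ R₀, satisfying the codimension-n profile equation U''(R) + ((n−1)/R)·U'(R) = W'(U(R)) for all R > 0. Then ∫_0^∞ W(U(R))·R^{n−1} dR = ((2−n)/(2n))·∫_0^∞ U'(R)²·R^{n−1} dR. -/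
open MeasureTheory Set Filter Topology

/- Pohozaev-type argument: along a solution of the profile equation the flux
`F(R) = Rⁿ (U'(R)²/2 - W(U(R)))` has derivative `((2 - n)/2 · U'² - n W(U)) Rⁿ⁻¹`.
Since `F` vanishes at `0` (because of the factor `Rⁿ`) and beyond `R₀` (because `U` does and
`W 0 = 0`), the integral of this derivative over `(0, ∞)` is zero, which is the identity. -/

theorem hasDerivAt_pow_mul_energy_density {n : ℕ} (hn : 1 ≤ n) {W U V : ℝ → ℝ}
    {R v' w' : ℝ} (hR : R ≠ 0) (hU : HasDerivAt U (V R) R) (hV : HasDerivAt V v' R)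
    (hW : HasDerivAt W w' (U R)) (hODE : v' + ((n - 1 : ℝ) / R) * V R = w') :
    HasDerivAt (fun r => r ^ n * (V r ^ 2 / 2 - W (U r)))
      ((2 - n : ℝ) / 2 * (V R ^ 2 * R ^ (n - 1)) - n * (W (U R) * R ^ (n - 1))) R := by
  have h := (hasDerivAt_pow n R).mul (((hV.pow 2).div_const 2).sub (hW.comp R hU))
  refine h.congr_deriv ?_
  have hRn : R ^ n = R ^ (n - 1) * R := by rw [← pow_succ, Nat.sub_add_cancel hn]
  simp only [Pi.sub_apply, Pi.pow_apply, Function.comp_apply, ← hODE, hRn]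
  field_simp
  ring

theorem integrableOn_Ioi_of_continuousOn_Icc_of_eq_zero {g : ℝ → ℝ} {a b : ℝ}
    (hg : ContinuousOn g (Icc a b)) (hzero : ∀ x, a < x → b < x → g x = 0) :
    IntegrableOn g (Ioi a) :=
  (hg.integrableOn_Icc.mono_set Ioc_subset_Icc_self).of_forall_sdiff_eq_zero measurableSet_Ioi
    fun x ⟨hxa, hxb⟩ => hzero x hxa (not_le.mp fun hle => hxb ⟨hxa, hle⟩)

theorem integral_potential_eq_of_profile {n : ℕ} (hn : 1 ≤ n) {W U V V' : ℝ → ℝ}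
    {R₀ : ℝ} (hW : Differentiable ℝ W) (hW0 : W 0 = 0)
    (hUc : ContinuousOn U (Ici 0)) (hVc : ContinuousOn V (Ici 0))
    (hU : ∀ R, 0 < R → HasDerivAt U (V R) R) (hV : ∀ R, 0 < R → HasDerivAt V (V' R) R)
    (hUsupp : ∀ R, R₀ ≤ R → U R = 0)
    (hODE : ∀ R, 0 < R → V' R + ((n - 1 : ℝ) / R) * V R = deriv W (U R)) :
    ∫ R in Ioi 0, W (U R) * R ^ (n - 1)
      = (2 - n : ℝ) / (2 * n) * ∫ R in Ioi 0, V R ^ 2 * R ^ (n - 1) := by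
  have hVsupp : ∀ R, 0 < R → R₀ < R → V R = 0 := fun R hR hR₀R => by
    have hUR : U =ᶠ[𝓝 R] fun _ => 0 :=
      eventually_of_mem (Ioi_mem_nhds hR₀R) fun x hx => hUsupp x hx.le
    rw [← (hU R hR).deriv, hUR.deriv_eq, deriv_const]
  have hWU : ContinuousOn (fun R => W (U R)) (Ici 0) := hW.continuous.comp_continuousOn hUc
  have hkin : IntegrableOn (fun R => V R ^ 2 * R ^ (n - 1)) (Ioi 0) :=
    integrableOn_Ioi_of_continuousOn_Icc_of_eq_zero (b := R₀)
      (((hVc.pow 2).mul (continuous_pow _).continuousOn).mono Icc_subset_Ici_self)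
      fun R hR hR₀R => by rw [hVsupp R hR hR₀R]; ring
  have hpot : IntegrableOn (fun R => W (U R) * R ^ (n - 1)) (Ioi 0) :=
    integrableOn_Ioi_of_continuousOn_Icc_of_eq_zero (b := R₀)
      ((hWU.mul (continuous_pow _).continuousOn).mono Icc_subset_Ici_self)
      fun R _ hR₀R => by rw [hUsupp R hR₀R.le, hW0, zero_mul]
  have hvirial := integral_Ioi_of_hasDerivAt_of_tendsto (m := 0)
    (f := fun r => r ^ n * (V r ^ 2 / 2 - W (U r)))
    (((continuous_pow n).continuousOn.mul (((hVc.pow 2).div_const 2).sub hWU)) 0 self_mem_Ici)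
    (fun R (hR : 0 < R) => hasDerivAt_pow_mul_energy_density hn hR.ne' (hU R hR) (hV R hR)
      (hW _).hasDerivAt (hODE R hR))
    ((hkin.const_mul _).sub (hpot.const_mul _))
    (tendsto_const_nhds.congr' (by
      filter_upwards [eventually_gt_atTop 0, eventually_gt_atTop R₀] with R hR hR₀R
      simp [hVsupp R hR hR₀R, hUsupp R hR₀R.le, hW0]))
  rw [integral_sub (hkin.const_mul _) (hpot.const_mul _), integral_const_mul,
    integral_const_mul, zero_pow (by omega), zero_mul, sub_zero] at hvirial
  have hn0 : (n : ℝ) ≠ 0 := by positivity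
  field_simp
  linarith

theorem stmt_12_general (n : ℕ) (hn : 2 ≤ n)
    (W : ℝ → ℝ) (hW : ContDiff ℝ 1 W) (hW0 : W 0 = 0)
    (R₀ : ℝ) (U : ℝ → ℝ)
    (hU : ContDiffOn ℝ 2 U (Set.Ici 0))
    (hUsupp : ∀ R : ℝ, R₀ ≤ R → U R = 0)
    (hODE : ∀ R : ℝ, 0 < R →
      deriv (deriv U) R + ((n - 1 : ℝ) / R) * deriv U R = deriv W (U R)) :
    (∫ R in Set.Ioi (0 : ℝ), W (U R) * R ^ (n - 1))
      = ((2 - n : ℝ) / (2 * n)) * ∫ R in Set.Ioi (0 : ℝ), (deriv U R) ^ 2 * R ^ (n - 1) := by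
  -- `deriv U` may be junk at `0`; the one-sided derivative `V` is continuous up to `0`.
  set V := derivWithin U (Ici 0)
  have hV : ∀ R, 0 < R → V R = deriv U R := fun R hR =>
    derivWithin_of_mem_nhds (Ici_mem_nhds hR)
  have hU' : ∀ R, 0 < R → HasDerivAt U (V R) R := fun R hR => by
    rw [hV R hR]
    exact ((hU.contDiffAt (Ici_mem_nhds hR)).differentiableAt two_ne_zero).hasDerivAt
  have hU'' : ∀ R, 0 < R → HasDerivAt V (deriv (deriv U) R) R := fun R hR =>
    have hdU : ContDiffOn ℝ 1 (deriv U) (Ioi 0) :=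
      (hU.mono Ioi_subset_Ici_self).deriv_of_isOpen isOpen_Ioi (by norm_num)
    ((hdU.contDiffAt (Ioi_mem_nhds hR)).differentiableAt one_ne_zero).hasDerivAt
      |>.congr_of_eventuallyEq (eventually_of_mem (Ioi_mem_nhds hR) hV)
  have hkin : ∫ R in Ioi 0, deriv U R ^ 2 * R ^ (n - 1) = ∫ R in Ioi 0, V R ^ 2 * R ^ (n - 1) :=
    setIntegral_congr_fun measurableSet_Ioi fun R hR => by rw [hV R hR]
  rw [hkin]
  exact integral_potential_eq_of_profile (V := V) (by omega) (hW.differentiable one_ne_zero) hW0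
    hU.continuousOn (hU.continuousOn_derivWithin (uniqueDiffOn_Ici 0) one_le_two) hU' hU''
    hUsupp fun R hR => by rw [hV R hR]; exact hODE R hR

/-- virial-type identity relating the potential and kinetic parts of the
codimension-`n` micelle profile energy. -/
theorem stmt_12 (n : ℕ) (hn : 2 ≤ n)
    (W : ℝ → ℝ) (hW : ContDiff ℝ 1 W) (hW0 : W 0 = 0)
    (R₀ : ℝ) (hR₀ : 0 < R₀) (U : ℝ → ℝ)
    (hU : ContDiffOn ℝ 2 U (Set.Ici 0))
    (hU'0 : derivWithin U (Set.Ici 0) 0 = 0)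
    (hUsupp : ∀ R : ℝ, R₀ ≤ R → U R = 0)
    (hODE : ∀ R : ℝ, 0 < R →
      deriv (deriv U) R + ((n - 1 : ℝ) / R) * deriv U R = deriv W (U R)) :
    (∫ R in Set.Ioi (0 : ℝ), W (U R) * R ^ (n - 1))
      = ((2 - n : ℝ) / (2 * n)) * ∫ R in Set.Ioi (0 : ℝ), (deriv U R) ^ 2 * R ^ (n - 1) :=
  stmt_12_general n hn W hW hW0 R₀ U hU hUsupp hODE
end
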